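/- Let n = 3 and let μ ∈ (0, 1] and ω > 0 be real. Then every complex root λ of Q_j satisfies Re λ = 0 for all j ∈ {0, 1, 2} if and only if μ = 1. That is, the equilateral triangle relative equilibrium with central mass is linearly stable if and only if all four masses are equal. -/

import Mathlib

open Real Finset

/-- `F_j = ω²·(12 − μ(n−1)(n−5) + μ(n² − 6nj + 6j² − 1)) / (6(2 + μ(n−1)))`. -/
noncomputable def Fcoef (n j : ℕ) (μ ω : ℝ) : ℝ :=
  ω ^ 2 * (12 - μ * ((n : ℝ) - 1) * ((n : ℝ) - 5)
      + μ * ((n : ℝ) ^ 2 - 6 * n * j + 6 * (j : ℝ) ^ 2 - 1))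
    / (6 * (2 + μ * ((n : ℝ) - 1)))

/-- `ε_j = 2μnω²/(2 + μ(n−1))` if `j = 1`, else `0`. -/
noncomputable def eps (n j : ℕ) (μ ω : ℝ) : ℝ :=
  if j = 1 then 2 * μ * n * ω ^ 2 / (2 + μ * ((n : ℝ) - 1)) else 0

/-- `ε'_j = 2μnω²/(2 + μ(n−1))` if `j = n−1`, else `0`. -/
noncomputable def eps' (n j : ℕ) (μ ω : ℝ) : ℝ :=
  if j = n - 1 then 2 * μ * n * ω ^ 2 / (2 + μ * ((n : ℝ) - 1)) else 0

/-- The stability quartic `Q_j(λ) = λ⁴ + 2ω²λ² + ω⁴ − (F_j + ε_j)(F_j + ε'_j)`. -/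
noncomputable def Q (n j : ℕ) (μ ω : ℝ) (lam : ℂ) : ℂ :=
  lam ^ 4 + 2 * (ω : ℂ) ^ 2 * lam ^ 2 + (ω : ℂ) ^ 4
    - ((Fcoef n j μ ω + eps n j μ ω : ℝ) : ℂ)
      * ((Fcoef n j μ ω + eps' n j μ ω : ℝ) : ℂ)

lemma re_eq_zero_of_sq_neg (ω : ℝ) (hω : 0 < ω) (lam : ℂ)
    (h : lam ^ 2 = -(2 * (ω : ℂ) ^ 2)) : lam.re = 0 := by
  have h1 : lam.re * lam.re - lam.im * lam.im = -(2 * ω ^ 2) := by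
    have := congrArg Complex.re h
    simpa [pow_two, Complex.mul_re] using this
  have h2 : lam.re * lam.im + lam.im * lam.re = 0 := by
    have := congrArg Complex.im h
    simpa [pow_two, Complex.mul_im] using this
  by_contra hre
  have him : lam.im = 0 := by
    have : lam.re * lam.im = 0 := by linarith
    rcases mul_eq_zero.mp this with h' | h'
    · exact absurd h' hre
    · exact h'
  nlinarith [sq_nonneg lam.re]

lemma re_eq_zero_of_factored (ω : ℝ) (hω : 0 < ω) (lam : ℂ)
    (h : lam ^ 2 * (lam ^ 2 + 2 * (ω : ℂ) ^ 2) = 0) : lam.re = 0 := by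
  rcases mul_eq_zero.mp h with h' | h'
  · have : lam = 0 := by
      exact pow_eq_zero_iff (by norm_num) |>.mp h'
    simp [this]
  · exact re_eq_zero_of_sq_neg ω hω lam (by linear_combination h')

/-- For `n = 3`: every root of every `Q_j` is purely imaginary iff `μ = 1`,
i.e. the equilateral triangle with central mass is linearly stable iff all
four masses are equal. -/
theorem triangle_stable_iff (μ ω : ℝ) (hμ : μ ∈ Set.Ioc (0 : ℝ) 1) (hω : 0 < ω) :
    (∀ j < 3, ∀ lam : ℂ, Q 3 j μ ω lam = 0 → lam.re = 0) ↔ μ = 1 := by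
  obtain ⟨hμ0, hμ1⟩ := hμ
  have hμm : (0 : ℝ) < 1 + μ := by linarith
  constructor
  · intro h
    by_contra hne
    have hμlt : μ < 1 := lt_of_le_of_ne hμ1 hne
    set s := Real.sqrt (1 + 3 * μ) with hs
    have hs2 : s ^ 2 = 1 + 3 * μ := Real.sq_sqrt (by linarith)
    have hsnn : 0 ≤ s := Real.sqrt_nonneg _
    have hsgt : 1 + μ < s := by nlinarith
    set r := ω ^ 2 * (s / (1 + μ) - 1) with hr
    have hrpos : 0 < r := by
      have h1 : 0 < s / (1 + μ) - 1 := by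
        rw [sub_pos, lt_div_iff₀ hμm]; linarith
      positivity
    have hFval : Fcoef 3 1 μ ω = ω ^ 2 / (1 + μ) := by
      simp only [Fcoef]
      norm_num
      rw [div_eq_div_iff (by linarith) (by linarith)]
      ring
    have hepsval : eps 3 1 μ ω = 3 * μ * ω ^ 2 / (1 + μ) := by
      simp only [eps, if_pos rfl]
      norm_num
      rw [div_eq_div_iff (by linarith) (by linarith)]
      ring
    have heps'val : eps' 3 1 μ ω = 0 := by simp [eps']
    have h1 : r + ω ^ 2 = ω ^ 2 * s / (1 + μ) := by
      rw [hr]; field_simp; ring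
    have hprod : (Fcoef 3 1 μ ω + eps 3 1 μ ω) * (Fcoef 3 1 μ ω + eps' 3 1 μ ω)
        = r ^ 2 + 2 * ω ^ 2 * r + ω ^ 4 := by
      rw [hFval, hepsval, heps'val,
        show r ^ 2 + 2 * ω ^ 2 * r + ω ^ 4 = (r + ω ^ 2) ^ 2 by ring, h1]
      field_simp
      linear_combination (-(ω ^ 2)) * hs2
    set lam : ℂ := ((Real.sqrt r : ℝ) : ℂ) with hlamdef
    have hl2 : lam ^ 2 = ((r : ℝ) : ℂ) := by
      rw [hlamdef]
      rw [show ((Real.sqrt r : ℝ) : ℂ) ^ 2 = (((Real.sqrt r) ^ 2 : ℝ) : ℂ) by push_cast; ring]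
      rw [Real.sq_sqrt hrpos.le]
    have hQ : Q 3 1 μ ω lam = 0 := by
      rw [Q, show lam ^ 4 = (lam ^ 2) ^ 2 by ring, hl2, ← Complex.ofReal_mul, hprod]
      push_cast
      ring
    have hre := h 1 (by norm_num) lam hQ
    have : lam.re = Real.sqrt r := by rw [hlamdef]; simp
    rw [this] at hre
    exact absurd hre (ne_of_gt (Real.sqrt_pos.mpr hrpos))
  · intro hμeq
    subst hμeq
    intro j hj lam hlam
    interval_cases j
    · have hF : Fcoef 3 0 1 ω = ω ^ 2 := by
        simp only [Fcoef]; norm_num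
      have he : eps 3 0 1 ω = 0 := by simp [eps]
      have he' : eps' 3 0 1 ω = 0 := by simp [eps']
      rw [Q, hF, he, he'] at hlam
      apply re_eq_zero_of_factored ω hω lam
      push_cast at hlam ⊢
      linear_combination hlam
    · have hF : Fcoef 3 1 1 ω = ω ^ 2 / 2 := by
        simp only [Fcoef]; norm_num; ring
      have he : eps 3 1 1 ω = 3 * ω ^ 2 / 2 := by
        simp only [eps, if_pos rfl]; norm_num; ring
      have he' : eps' 3 1 1 ω = 0 := by simp [eps']
      rw [Q, hF, he, he'] at hlam
      apply re_eq_zero_of_factored ω hω lam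
      push_cast at hlam ⊢
      linear_combination hlam
    · have hF : Fcoef 3 2 1 ω = ω ^ 2 / 2 := by
        simp only [Fcoef]; norm_num; ring
      have he : eps 3 2 1 ω = 0 := by simp [eps]
      have he' : eps' 3 2 1 ω = 3 * ω ^ 2 / 2 := by
        simp only [eps', if_pos rfl]; norm_num; ring
      rw [Q, hF, he, he'] at hlam
      apply re_eq_zero_of_factored ω hω lam
      push_cast at hlam ⊢
      linear_combination hlam
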